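/- Let A be a nonnegative self-adjoint operator on a Hilbert space H, T_t = e^{-tA}, and define G f = ∫₀^∞ T_t f dt ∈ [0,∞]-valued pairing ⟨f, Gf⟩ = ∫₀^∞ ⟨f, T_t f⟩ dt for f ∈ H. Then sup{ ⟨f, u⟩ / ‖√A u‖ : u ∈ D(√A), √A u ≠ 0, ⟨f,u⟩ ≥ 0 }² = ⟨f, Gf⟩, for any f ∈ H with f ≥ 0 in the sense that ⟨f, T_t f⟩ ≥ 0 for all t; more precisely, ⟨f, Gf⟩ = ∫_{(0,∞)} λ^{-1} d⟨E_λ f, f⟩ ∈ [0,∞] (where E is the spectral measure of A, and the value is +∞ if f has spectral mass at 0), and this quantity is finite if and only if there is C with |⟨f,u⟩| ≤ C‖√A u‖ for all u ∈ D(√A), in which case the optimal C² equals ⟨f, Gf⟩. -/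

import Mathlib

/-!
With `A` the multiplication by `a`, `∫₀^∞ e^{-ta} dt = 1/a`, so Tonelli for the finite measure
`f² μ` (the spectral measure of `f`, pulled back along `a`) turns `⟨f, Gf⟩` into `∫ f² / a`.
If this is finite, `f = 0` where `a = 0` and Cauchy–Schwarz for `f u = (f / √a) (√a u)` gives the
bound with `C² = ∫ f² / a`. Conversely, testing the bound against the resolvent
`u = f / (a + ε)` gives `‖√a u‖² ≤ ⟨f, u⟩ = ∫ f² / (a + ε)`, hence `∫ f² / (a + ε) ≤ C²`, and
monotone convergence as `ε → 0` yields `∫ f² / a ≤ C²`.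
-/

open MeasureTheory ENNReal Set

theorem lintegral_exp_neg_mul_Ioi {c : ℝ} (hc : 0 ≤ c) :
    ∫⁻ t in Ioi (0 : ℝ), ENNReal.ofReal (Real.exp (-(t * c))) = (ENNReal.ofReal c)⁻¹ := by
  rcases hc.eq_or_lt with rfl | hc
  · simp [Real.volume_Ioi]
  have hint : IntegrableOn (fun t => Real.exp (-(t * c))) (Ioi 0) := by
    simpa [neg_mul, mul_comm] using exp_neg_integrableOn_Ioi 0 hc
  have hval : ∫ t in Ioi (0 : ℝ), Real.exp (-(t * c)) = c⁻¹ := by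
    simpa only [zero_mul, integral_exp_neg_Ioi, neg_zero, Real.exp_zero, smul_eq_mul, mul_one]
      using integral_comp_mul_right_Ioi (fun y => Real.exp (-y)) 0 hc
  rw [← ofReal_integral_eq_lintegral_ofReal hint (.of_forall fun t => (Real.exp_pos _).le), hval,
    ENNReal.ofReal_inv_of_pos hc]

theorem ENNReal.iSup_div_add_inv_natCast_add_one (x y : ℝ≥0∞) :
    ⨆ n : ℕ, x / (y + ((n : ℝ≥0∞) + 1)⁻¹) = x / y := by
  have hinf : ⨅ n : ℕ, ((n : ℝ≥0∞) + 1)⁻¹ = 0 := by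
    rw [← ENNReal.inv_iSup, ← ENNReal.iSup_add, ENNReal.iSup_natCast, top_add, inv_top]
  simp only [div_eq_mul_inv, ← ENNReal.mul_iSup, ← ENNReal.inv_iInf, ← ENNReal.add_iInf, hinf,
    add_zero]

section

variable {Ω : Type*} [MeasurableSpace Ω] {μ : Measure Ω} {a f : Ω → ℝ}

theorem lintegral_Ioi_lintegral_exp_neg_mul [SFinite μ] (hameas : Measurable a)
    (ha : ∀ ω, 0 ≤ a ω) :
    ∫⁻ t in Ioi (0 : ℝ), ∫⁻ ω, ENNReal.ofReal (Real.exp (-(t * a ω))) ∂μ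
      = ∫⁻ ω, (ENNReal.ofReal (a ω))⁻¹ ∂μ := by
  rw [lintegral_lintegral_swap]
  · exact lintegral_congr fun ω => lintegral_exp_neg_mul_Ioi (ha ω)
  · fun_prop

theorem ofReal_integral_exp_neg_mul_sq_eq_lintegral_withDensity (hameas : Measurable a)
    (ha : ∀ ω, 0 ≤ a ω) (hfmeas : Measurable f) (hf : MemLp f 2 μ) {t : ℝ} (ht : 0 ≤ t) :
    ENNReal.ofReal (∫ ω, Real.exp (-(t * a ω)) * f ω ^ 2 ∂μ)
      = ∫⁻ ω, ENNReal.ofReal (Real.exp (-(t * a ω)))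
          ∂μ.withDensity fun ω => ENNReal.ofReal (f ω ^ 2) := by
  have hexp_le : ∀ ω, Real.exp (-(t * a ω)) ≤ 1 := fun ω =>
    Real.exp_le_one_iff.mpr (neg_nonpos.mpr (mul_nonneg ht (ha ω)))
  have hint : Integrable (fun ω => Real.exp (-(t * a ω)) * f ω ^ 2) μ := by
    refine hf.integrable_sq.mono' (((hameas.const_mul t).neg.exp).mul
      (hfmeas.pow_const 2)).aestronglyMeasurable (.of_forall fun ω => ?_)
    rw [Real.norm_of_nonneg (by positivity)]
    exact mul_le_of_le_one_left (sq_nonneg _) (hexp_le ω)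
  rw [ofReal_integral_eq_lintegral_ofReal hint (.of_forall fun ω => by positivity),
    lintegral_withDensity_eq_lintegral_mul _ (hfmeas.pow_const 2).ennreal_ofReal
      (by fun_prop : Measurable fun ω => ENNReal.ofReal (Real.exp (-(t * a ω))))]
  exact lintegral_congr fun ω => by
    rw [Pi.mul_apply, ENNReal.ofReal_mul (Real.exp_pos _).le, mul_comm]

theorem lintegral_heat_pairing_eq_lintegral_div (hameas : Measurable a) (ha : ∀ ω, 0 ≤ a ω)
    (hfmeas : Measurable f) (hf : MemLp f 2 μ) :
    ∫⁻ t in Ioi (0 : ℝ), ENNReal.ofReal (∫ ω, Real.exp (-(t * a ω)) * f ω ^ 2 ∂μ)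
      = ∫⁻ ω, ENNReal.ofReal (f ω ^ 2) / ENNReal.ofReal (a ω) ∂μ := by
  have : IsFiniteMeasure (μ.withDensity fun ω => ENNReal.ofReal (f ω ^ 2)) :=
    isFiniteMeasure_withDensity_ofReal hf.integrable_sq.hasFiniteIntegral
  rw [setLIntegral_congr_fun measurableSet_Ioi fun t ht =>
      ofReal_integral_exp_neg_mul_sq_eq_lintegral_withDensity hameas ha hfmeas hf (le_of_lt ht),
    lintegral_Ioi_lintegral_exp_neg_mul hameas ha,
    lintegral_withDensity_eq_lintegral_mul _ (hfmeas.pow_const 2).ennreal_ofReal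
      (by fun_prop : Measurable fun ω => (ENNReal.ofReal (a ω))⁻¹)]
  simp only [Pi.mul_apply, div_eq_mul_inv]

theorem abs_integral_mul_le_sqrt_mul_sqrt {g h : Ω → ℝ} (hg : MemLp g 2 μ) (hh : MemLp h 2 μ) :
    |∫ ω, g ω * h ω ∂μ| ≤ Real.sqrt (∫ ω, g ω ^ 2 ∂μ) * Real.sqrt (∫ ω, h ω ^ 2 ∂μ) := by
  calc |∫ ω, g ω * h ω ∂μ| ≤ ∫ ω, |g ω| * |h ω| ∂μ := by
        simpa only [norm_mul, Real.norm_eq_abs] using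
          norm_integral_le_integral_norm (μ := μ) fun ω => g ω * h ω
    _ ≤ (∫ ω, ‖g ω‖ ^ (2 : ℝ) ∂μ) ^ (1 / (2 : ℝ))
          * (∫ ω, ‖h ω‖ ^ (2 : ℝ) ∂μ) ^ (1 / (2 : ℝ)) :=
        integral_mul_norm_le_Lp_mul_Lq .two_two (by simpa using hg) (by simpa using hh)
    _ = Real.sqrt (∫ ω, g ω ^ 2 ∂μ) * Real.sqrt (∫ ω, h ω ^ 2 ∂μ) := by
        simp only [Real.rpow_two, Real.norm_eq_abs, sq_abs, Real.sqrt_eq_rpow, one_div]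

theorem abs_integral_mul_le_of_lintegral_div_ne_top (hameas : Measurable a) (ha : ∀ ω, 0 ≤ a ω)
    (hfmeas : Measurable f)
    (hG : ∫⁻ ω, ENNReal.ofReal (f ω ^ 2) / ENNReal.ofReal (a ω) ∂μ ≠ ⊤) {u : Ω → ℝ}
    (hu : MemLp (fun ω => Real.sqrt (a ω) * u ω) 2 μ) :
    |∫ ω, f ω * u ω ∂μ|
      ≤ Real.sqrt (∫⁻ ω, ENNReal.ofReal (f ω ^ 2) / ENNReal.ofReal (a ω) ∂μ).toReal
        * Real.sqrt (∫ ω, a ω * u ω ^ 2 ∂μ) := by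
  have hvanish : ∀ᵐ ω ∂μ, a ω = 0 → f ω = 0 := by
    filter_upwards [ae_lt_top (by fun_prop) hG] with ω hω ha0
    by_contra hf0
    simp [ha0, ENNReal.div_zero, hf0] at hω
  set g : Ω → ℝ := fun ω => f ω / Real.sqrt (a ω)
  have hgmeas : Measurable g := hfmeas.div hameas.sqrt
  have hg_sq : ∀ᵐ ω ∂μ,
      ENNReal.ofReal (g ω ^ 2) = ENNReal.ofReal (f ω ^ 2) / ENNReal.ofReal (a ω) := by
    filter_upwards [hvanish] with ω hω
    rcases (ha ω).eq_or_lt with ha0 | ha0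
    · simp [g, hω ha0.symm]
    · rw [div_pow, Real.sq_sqrt (ha ω), ENNReal.ofReal_div_of_pos ha0]
  have hg_lint : ∫⁻ ω, ENNReal.ofReal (g ω ^ 2) ∂μ
      = ∫⁻ ω, ENNReal.ofReal (f ω ^ 2) / ENNReal.ofReal (a ω) ∂μ := lintegral_congr_ae hg_sq
  have hg : MemLp g 2 μ := by
    refine (memLp_two_iff_integrable_sq hgmeas.aestronglyMeasurable).2
      ⟨(hgmeas.pow_const 2).aestronglyMeasurable, ?_⟩
    rw [hasFiniteIntegral_iff_ofReal (.of_forall fun ω => sq_nonneg _), hg_lint]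
    exact hG.lt_top
  have hfu : (fun ω => f ω * u ω) =ᵐ[μ] fun ω => g ω * (Real.sqrt (a ω) * u ω) := by
    filter_upwards [hvanish] with ω hω
    rcases (ha ω).eq_or_lt with ha0 | ha0
    · simp [g, hω ha0.symm]
    · have : Real.sqrt (a ω) ≠ 0 := (Real.sqrt_pos.2 ha0).ne'
      simp only [g]
      field_simp
  calc |∫ ω, f ω * u ω ∂μ| = |∫ ω, g ω * (Real.sqrt (a ω) * u ω) ∂μ| := by
        rw [integral_congr_ae hfu]
    _ ≤ _ := abs_integral_mul_le_sqrt_mul_sqrt hg hu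
    _ = _ := by
        rw [integral_eq_lintegral_of_nonneg_ae (.of_forall fun ω => sq_nonneg _)
          (hgmeas.pow_const 2).aestronglyMeasurable, hg_lint]
        simp only [mul_pow, Real.sq_sqrt (ha _)]

theorem integrable_sq_div_add (hameas : Measurable a) (ha : ∀ ω, 0 ≤ a ω)
    (hfmeas : Measurable f) (hf : MemLp f 2 μ) {ε : ℝ} (hε : 0 < ε) :
    Integrable (fun ω => f ω ^ 2 / (a ω + ε)) μ := by
  refine (hf.integrable_sq.div_const ε).mono' ((hfmeas.pow_const 2).div
    (hameas.add_const ε)).aestronglyMeasurable (.of_forall fun ω => ?_)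
  rw [Real.norm_of_nonneg (div_nonneg (sq_nonneg _) (add_pos_of_nonneg_of_pos (ha ω) hε).le)]
  exact div_le_div_of_nonneg_left (sq_nonneg _) hε (le_add_of_nonneg_left (ha ω))

theorem integral_sq_div_add_le_sq (hameas : Measurable a) (ha : ∀ ω, 0 ≤ a ω)
    (hfmeas : Measurable f) (hf : MemLp f 2 μ) {C : ℝ} (hC : 0 ≤ C)
    (hbdd : ∀ u : Ω → ℝ, MemLp u 2 μ → MemLp (fun ω => Real.sqrt (a ω) * u ω) 2 μ →
      |∫ ω, f ω * u ω ∂μ| ≤ C * Real.sqrt (∫ ω, a ω * u ω ^ 2 ∂μ))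
    {ε : ℝ} (hε : 0 < ε) :
    ∫ ω, f ω ^ 2 / (a ω + ε) ∂μ ≤ C ^ 2 := by
  have hpos : ∀ ω, 0 < a ω + ε := fun ω => add_pos_of_nonneg_of_pos (ha ω) hε
  set u : Ω → ℝ := fun ω => f ω / (a ω + ε)
  have humeas : Measurable u := hfmeas.div (hameas.add_const ε)
  have hfu : ∀ ω, f ω * u ω = f ω ^ 2 / (a ω + ε) := fun ω => by
    simp only [u]; ring
  have hau : ∀ ω, a ω * u ω ^ 2 ≤ f ω * u ω := fun ω => by
    rw [hfu, div_pow, mul_div_assoc', div_le_div_iff₀ (pow_pos (hpos ω) 2) (hpos ω)]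
    nlinarith [mul_nonneg (mul_nonneg (sq_nonneg (f ω)) (hpos ω).le) hε.le]
  have hint := integrable_sq_div_add hameas ha hfmeas hf hε
  have hu : MemLp u 2 μ := by
    refine hf.of_le_mul humeas.aestronglyMeasurable (c := ε⁻¹) (.of_forall fun ω => ?_)
    rw [norm_div, Real.norm_of_nonneg (hpos ω).le, div_eq_inv_mul]
    exact mul_le_mul_of_nonneg_right
      (inv_anti₀ hε (le_add_of_nonneg_left (ha ω))) (norm_nonneg _)
  have hau_int : Integrable (fun ω => a ω * u ω ^ 2) μ := by
    refine hint.mono' (hameas.mul (humeas.pow_const 2)).aestronglyMeasurable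
      (.of_forall fun ω => ?_)
    rw [Real.norm_of_nonneg (mul_nonneg (ha ω) (sq_nonneg _)), ← hfu]
    exact hau ω
  have hsu : MemLp (fun ω => Real.sqrt (a ω) * u ω) 2 μ := by
    refine (memLp_two_iff_integrable_sq (hameas.sqrt.mul humeas).aestronglyMeasurable).2 ?_
    simpa only [Pi.mul_apply, mul_pow, Real.sq_sqrt (ha _)] using hau_int
  set J := ∫ ω, f ω ^ 2 / (a ω + ε) ∂μ
  have hJ : J ≤ C * Real.sqrt J := by
    calc J = ∫ ω, f ω * u ω ∂μ := by simp only [hfu, J]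
      _ ≤ |∫ ω, f ω * u ω ∂μ| := le_abs_self _
      _ ≤ C * Real.sqrt (∫ ω, a ω * u ω ^ 2 ∂μ) := hbdd u hu hsu
      _ ≤ C * Real.sqrt J := by
          gcongr
          exact integral_mono hau_int hint fun ω => (hau ω).trans_eq (hfu ω)
  have hJ0 : 0 ≤ J := integral_nonneg fun ω => div_nonneg (sq_nonneg _) (hpos ω).le
  have hsq := Real.sq_sqrt hJ0
  nlinarith [Real.sqrt_nonneg J, sq_nonneg (Real.sqrt J - C)]

theorem lintegral_div_eq_iSup_lintegral_div_add {g : Ω → ℝ≥0∞} (hgmeas : Measurable g)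
    (hameas : Measurable a) (ha : ∀ ω, 0 ≤ a ω) :
    ∫⁻ ω, g ω / ENNReal.ofReal (a ω) ∂μ
      = ⨆ n : ℕ, ∫⁻ ω, g ω / ENNReal.ofReal (a ω + ((n : ℝ) + 1)⁻¹) ∂μ := by
  have hsplit : ∀ ω (n : ℕ), ENNReal.ofReal (a ω + ((n : ℝ) + 1)⁻¹)
      = ENNReal.ofReal (a ω) + ((n : ℝ≥0∞) + 1)⁻¹ := fun ω n => by
    rw [ENNReal.ofReal_add (ha ω) (by positivity), ENNReal.ofReal_inv_of_pos (by positivity),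
      ENNReal.ofReal_add n.cast_nonneg zero_le_one, ENNReal.ofReal_natCast, ENNReal.ofReal_one]
  simp only [hsplit]
  rw [← lintegral_iSup (fun n => by fun_prop) fun m n hmn ω => ?_]
  · simp only [ENNReal.iSup_div_add_inv_natCast_add_one]
  · gcongr

theorem lintegral_div_le_sq (hameas : Measurable a) (ha : ∀ ω, 0 ≤ a ω)
    (hfmeas : Measurable f) (hf : MemLp f 2 μ) {C : ℝ} (hC : 0 ≤ C)
    (hbdd : ∀ u : Ω → ℝ, MemLp u 2 μ → MemLp (fun ω => Real.sqrt (a ω) * u ω) 2 μ →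
      |∫ ω, f ω * u ω ∂μ| ≤ C * Real.sqrt (∫ ω, a ω * u ω ^ 2 ∂μ)) :
    ∫⁻ ω, ENNReal.ofReal (f ω ^ 2) / ENNReal.ofReal (a ω) ∂μ ≤ ENNReal.ofReal (C ^ 2) := by
  rw [lintegral_div_eq_iSup_lintegral_div_add (by fun_prop) hameas ha]
  refine iSup_le fun n => ?_
  have hε : (0 : ℝ) < ((n : ℝ) + 1)⁻¹ := by positivity
  have hpos : ∀ ω, 0 < a ω + ((n : ℝ) + 1)⁻¹ := fun ω => add_pos_of_nonneg_of_pos (ha ω) hε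
  simp only [← ENNReal.ofReal_div_of_pos (hpos _)]
  rw [← ofReal_integral_eq_lintegral_ofReal (integrable_sq_div_add hameas ha hfmeas hf hε)
    (.of_forall fun ω => div_nonneg (sq_nonneg _) (hpos ω).le)]
  exact ENNReal.ofReal_le_ofReal (integral_sq_div_add_le_sq hameas ha hfmeas hf hC hbdd hε)

end

theorem green_pairing_variational_general
    (Ω : Type) [MeasurableSpace Ω] (μ : Measure Ω)
    (a f : Ω → ℝ) (hameas : Measurable a) (ha : ∀ ω, 0 ≤ a ω)
    (hfmeas : Measurable f) (hf : MemLp f 2 μ) :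
    ∀ (Gval : ℝ≥0∞) (Bdd : ℝ → Prop),
      Gval = (∫⁻ t in Set.Ioi (0:ℝ),
        ENNReal.ofReal (∫ ω, Real.exp (-(t * a ω)) * f ω ^ 2 ∂μ)) →
      (∀ C : ℝ, Bdd C ↔ ∀ u : Ω → ℝ, MemLp u 2 μ →
        MemLp (fun ω => Real.sqrt (a ω) * u ω) 2 μ →
        |∫ ω, f ω * u ω ∂μ| ≤ C * Real.sqrt (∫ ω, a ω * u ω ^ 2 ∂μ)) →
      (Gval = ∫⁻ ω, ENNReal.ofReal (f ω ^ 2) / ENNReal.ofReal (a ω) ∂μ) ∧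
      (Gval ≠ ⊤ ↔ ∃ C : ℝ, 0 ≤ C ∧ Bdd C) ∧
      (Gval ≠ ⊤ → IsLeast {C : ℝ | 0 ≤ C ∧ Bdd C} (Real.sqrt Gval.toReal)) := by
  intro Gval Bdd hGval hBdd
  rw [lintegral_heat_pairing_eq_lintegral_div hameas ha hfmeas hf] at hGval
  have hupper : ∀ C, 0 ≤ C → Bdd C → Gval ≤ ENNReal.ofReal (C ^ 2) := fun C hC hC' =>
    hGval ▸ lintegral_div_le_sq hameas ha hfmeas hf hC ((hBdd C).1 hC')
  have hoptimal : Gval ≠ ⊤ → Bdd (Real.sqrt Gval.toReal) := fun hfin =>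
    (hBdd _).2 fun u _ hu =>
      hGval ▸ abs_integral_mul_le_of_lintegral_div_ne_top hameas ha hfmeas (hGval ▸ hfin) hu
  refine ⟨hGval, ⟨fun hfin => ⟨_, Real.sqrt_nonneg _, hoptimal hfin⟩, ?_⟩,
    fun hfin => ⟨⟨Real.sqrt_nonneg _, hoptimal hfin⟩, ?_⟩⟩
  · rintro ⟨C, hC, hC'⟩
    exact ne_top_of_le_ne_top ENNReal.ofReal_ne_top (hupper C hC hC')
  · rintro C ⟨hC, hC'⟩
    exact Real.sqrt_le_iff.2
      ⟨hC, ENNReal.toReal_le_of_le_ofReal (sq_nonneg C) (hupper C hC hC')⟩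

/-- The variational identity behind subcriticality: for a nonnegative self-adjoint
operator `A` (multiplication by a measurable `a ≥ 0` on `L²(μ)`) and `0 ≤ f ∈ L²(μ)`,
`⟨f, Gf⟩ := ∫₀^∞ ⟨f, e^{-tA} f⟩ dt` equals `∫ λ⁻¹ d⟨E_λ f, f⟩ ∈ [0,∞]` (the value being
`∞` if `f` has spectral mass at `0`); it is finite iff there is `C` with
`|⟨f,u⟩| ≤ C‖√A u‖` for all `u ∈ D(√A)`, and then the optimal `C²` equals `⟨f, Gf⟩`. -/
theorem green_pairing_variational
    (Ω : Type) [MeasurableSpace Ω] (μ : Measure Ω)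
    (a f : Ω → ℝ) (hameas : Measurable a) (ha : ∀ ω, 0 ≤ a ω)
    (hfmeas : Measurable f) (hf : MemLp f 2 μ) (hfpos : ∀ ω, 0 ≤ f ω) :
    ∀ (Gval : ℝ≥0∞) (Bdd : ℝ → Prop),
      Gval = (∫⁻ t in Set.Ioi (0:ℝ),
        ENNReal.ofReal (∫ ω, Real.exp (-(t * a ω)) * f ω ^ 2 ∂μ)) →
      (∀ C : ℝ, Bdd C ↔ ∀ u : Ω → ℝ, MemLp u 2 μ →
        MemLp (fun ω => Real.sqrt (a ω) * u ω) 2 μ →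
        |∫ ω, f ω * u ω ∂μ| ≤ C * Real.sqrt (∫ ω, a ω * u ω ^ 2 ∂μ)) →
      (Gval = ∫⁻ ω, ENNReal.ofReal (f ω ^ 2) / ENNReal.ofReal (a ω) ∂μ) ∧
      (Gval ≠ ⊤ ↔ ∃ C : ℝ, 0 ≤ C ∧ Bdd C) ∧
      (Gval ≠ ⊤ → IsLeast {C : ℝ | 0 ≤ C ∧ Bdd C} (Real.sqrt Gval.toReal)) :=
  green_pairing_variational_general Ω μ a f hameas ha hfmeas hf
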